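/- Let F be a finite field with q elements, q odd. Then for every a ∈ F and every integer n ≥ 1, ∑_{f} λ(f)·η(f(a)) equals (q − 1)·q^{n/2 − 1} if n is even, and equals 0 if n is odd; here the sum runs over all monic polynomials f ∈ F[T] of degree n, η : F → ℤ is the quadratic character of F (η(0) = 0, η(x) = 1 if x is a nonzero square in F, η(x) = −1 otherwise), and f(a) denotes the evaluation of f at a. -/

import Mathlib

open Polynomial
open scoped Classical

/-- The Möbius function on `F[T]`: `(-1)^k` for a squarefree polynomial with `k`
irreducible factors, and `0` for non-squarefree polynomials. -/
noncomputable def polyMoebius {F : Type*} [Field F] (f : F[X]) : ℤ :=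
  if Squarefree f then (-1) ^ Multiset.card (UniqueFactorizationMonoid.factors f) else 0

/-- The Liouville function on `F[T]`: `(-1)^{Ω(f)}` where `Ω(f)` is the number of
irreducible factors of `f` counted with multiplicity. -/
noncomputable def polyLiouville {F : Type*} [Field F] (f : F[X]) : ℤ :=
  (-1) ^ Multiset.card (UniqueFactorizationMonoid.factors f)

/-- The sum of a weight `w` over all monic polynomials of degree `n` in `F[T]`. -/
noncomputable def coeffSum {F : Type*} [Field F] (w : F[X] → ℤ) (n : ℕ) : ℤ :=
  ∑ᶠ f ∈ {f : F[X] | f.Monic ∧ f.natDegree = n}, w f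

/-- `e_even`: the sum of the even-index elementary symmetric polynomials in
`cos θ_1, …, cos θ_d`, i.e. `½(∏(1 + cos θ_j) + ∏(1 − cos θ_j))`. -/
noncomputable def eEven {d : ℕ} (θ : Fin d → ℝ) : ℝ :=
  ((∏ j, (1 + Real.cos (θ j))) + ∏ j, (1 - Real.cos (θ j))) / 2

/-- `e_odd`: the sum of the odd-index elementary symmetric polynomials in
`cos θ_1, …, cos θ_d`, i.e. `½(∏(1 + cos θ_j) − ∏(1 − cos θ_j))`. -/
noncomputable def eOdd {d : ℕ} (θ : Fin d → ℝ) : ℝ :=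
  ((∏ j, (1 + Real.cos (θ j))) - ∏ j, (1 - Real.cos (θ j))) / 2

/-- The constant `C_m = ∏_{i=1}^r (1 − q^{−M_i}) / (2^{M'} ∏_{j=1}^{M'} sin² θ_j)`. -/
noncomputable def biasConst {d r : ℕ} (q : ℕ) (Mi : Fin r → ℕ) (θ : Fin d → ℝ) : ℝ :=
  (∏ i, (1 - (q : ℝ) ^ (-(Mi i : ℤ)))) / (2 ^ d * ∏ j, Real.sin (θ j) ^ 2)

/-- The quadratic character of a finite field `F`: `η(0) = 0`, `η(x) = 1` if `x` is a
nonzero square, and `η(x) = −1` otherwise. -/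
noncomputable def quadChar (F : Type*) [Field F] (x : F) : ℤ :=
  if x = 0 then 0 else if IsSquare x then 1 else -1

/-!
Let `χ(f) = η(f(a))`, a completely multiplicative function on `F[T]`. Convolving `λχ` with `χ`
over factorisations `f = d * e` of monic polynomials of degree `n` gives, on one side,
`∑_{deg f = n} χ(f) ∑_{d ∣ f} λ(d)`, and `∑_{d ∣ f} λ(d)` is `1` if `f` is a square and `0`
otherwise; so it equals `∑_{deg h = n/2} χ(h²)`, the number `(q - 1) q^{n/2 - 1}` of monic `h`
with `h(a) ≠ 0` (and `0` for odd `n`). On the other side only `e = 1` survives, because the sum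
of `χ` over the monic polynomials of any positive degree vanishes: translating by constants shows
that `f(a)` is equidistributed, and `∑_x η(x) = 0` for odd `q`.
-/

open Finset UniqueFactorizationMonoid

namespace Multiset

variable {α : Type*} [DecidableEq α]

theorem even_iff_forall_even_count {t : Multiset α} : Even t ↔ ∀ a, Even (t.count a) := by
  refine ⟨fun ⟨r, hr⟩ a => ⟨r.count a, by rw [hr, count_add]⟩, fun h => ?_⟩
  refine ⟨∑ a ∈ t.toFinset, (t.count a / 2) • {a}, ?_⟩
  conv_lhs => rw [← toFinset_sum_count_nsmul_eq t]
  rw [← sum_add_distrib]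
  refine sum_congr rfl fun a _ => ?_
  obtain ⟨k, hk⟩ := h a
  rw [← add_nsmul, hk]
  congr 1
  omega

theorem count_eq_zero_or_of_disjoint {u v : Multiset α} (huv : Disjoint u v) (a : α) :
    u.count a = 0 ∨ v.count a = 0 := by
  by_contra! h
  exact disjoint_left.mp huv (count_ne_zero.mp h.1) (count_ne_zero.mp h.2)

theorem even_add_iff_of_disjoint {u v : Multiset α} (huv : Disjoint u v) :
    Even (u + v) ↔ Even u ∧ Even v := by
  simp only [even_iff_forall_even_count, count_add]
  refine ⟨fun h => ⟨fun a => ?_, fun a => ?_⟩, fun h a => h.1 a |>.add (h.2 a)⟩ <;>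
    have := h a <;> simp only [Nat.even_iff] at this ⊢ <;>
    rcases count_eq_zero_or_of_disjoint huv a with h0 | h0 <;> omega

theorem even_replicate {n : ℕ} {a : α} : Even (replicate n a) ↔ Even n := by
  refine ⟨fun h => by simpa using (even_iff_forall_even_count.mp h a), fun ⟨k, hk⟩ => ?_⟩
  exact ⟨replicate k a, by rw [hk, replicate_add]⟩

theorem sum_Iic_add_of_disjoint {M : Type*} [AddCommMonoid M] {u v : Multiset α}
    (huv : Disjoint u v) (g : Multiset α → M) :
    ∑ s ∈ Finset.Iic (u + v), g s = ∑ x ∈ Finset.Iic u, ∑ y ∈ Finset.Iic v, g (x + y) := by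
  have hcount := count_eq_zero_or_of_disjoint huv
  rw [← sum_product']
  symm
  refine sum_nbij' (fun p => p.1 + p.2) (fun s => (s ∩ u, s ∩ v)) ?_ ?_ ?_ ?_ fun _ _ => rfl
  · rintro ⟨x, y⟩ hxy
    simp only [Finset.mem_product, Finset.mem_Iic] at hxy ⊢
    exact add_le_add hxy.1 hxy.2
  · intro s _
    simp only [Finset.mem_product, Finset.mem_Iic]
    exact ⟨inter_le_right, inter_le_right⟩
  · rintro ⟨x, y⟩ hxy
    simp only [Finset.mem_product, Finset.mem_Iic, le_iff_count] at hxy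
    obtain ⟨hx, hy⟩ := hxy
    ext a <;> simp only [count_add, count_inter] <;>
      have := hx a <;> have := hy a <;> rcases hcount a with h0 | h0 <;> omega
  · intro s hs
    simp only [Finset.mem_Iic, le_iff_count, count_add] at hs
    ext a
    simp only [count_add, count_inter]
    have := hs a
    rcases hcount a with h0 | h0 <;> omega

theorem sum_Iic_replicate {M : Type*} [AddCommMonoid M] (n : ℕ) (a : α) (g : Multiset α → M) :
    ∑ s ∈ Finset.Iic (replicate n a), g s = ∑ k ∈ Finset.range (n + 1), g (replicate k a) := by
  have hIic : Finset.Iic (replicate n a)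
      = (Finset.range (n + 1)).map ⟨(replicate · a), replicate_left_injective a⟩ := by
    ext s
    simp [le_replicate_iff, eq_comm]
  rw [hIic, sum_map]
  rfl

theorem sum_Iic_neg_one_pow_card (t : Multiset α) :
    ∑ s ∈ Finset.Iic t, (-1 : ℤ) ^ card s = if Even t then 1 else 0 := by
  induction hn : card t using Nat.strong_induction_on generalizing t with
  | _ n ih =>
  rcases empty_or_exists_mem t with rfl | ⟨a, ha⟩
  · rw [← bot_eq_zero, Finset.Iic_bot]
    simp
  set t' := t.filter (· ≠ a)
  have hsplit : replicate (t.count a) a + t' = t := by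
    rw [← filter_eq', filter_add_not]
  have hdisj : Disjoint (replicate (t.count a) a) t' := by
    rw [disjoint_left]
    intro b hb hb'
    exact (of_mem_filter hb') (eq_of_mem_replicate hb)
  have hlt : card t' < n := by
    have := congrArg card hsplit
    rw [card_add, card_replicate] at this
    have := count_pos.mpr ha
    omega
  rw [← hsplit, sum_Iic_add_of_disjoint hdisj, sum_Iic_replicate, even_add_iff_of_disjoint hdisj]
  simp_rw [card_add, card_replicate, pow_add, ← mul_sum, ← sum_mul, ih _ hlt t' rfl,
    neg_one_geom_sum, even_replicate, Nat.even_add_one]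
  by_cases hc : Even (t.count a) <;> by_cases ht' : Even t' <;> simp [hc, ht']

end Multiset

theorem polyLiouville_eq_neg_one_pow {F : Type*} [Field F] (f : F[X]) :
    polyLiouville f = (-1) ^ Multiset.card (normalizedFactors f) := by
  rw [polyLiouville, normalizedFactors, Multiset.card_map]

namespace Polynomial

section Factors

variable {F : Type*} [Field F]

theorem monic_of_mem_normalizedFactors {f p : F[X]} (hp : p ∈ normalizedFactors f) : p.Monic :=
  (normalize_eq_self_iff_monic (ne_of_mem_of_not_mem hp (zero_notMem_normalizedFactors f))).mp
    (normalize_normalized_factor p hp)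

theorem monic_prod_of_le_normalizedFactors {f : F[X]} {s : Multiset F[X]}
    (hs : s ≤ normalizedFactors f) : s.prod.Monic := by
  simpa using monic_multiset_prod_of_monic s id fun p hp =>
    monic_of_mem_normalizedFactors (Multiset.mem_of_le hs hp)

theorem normalizedFactors_prod_of_le {f : F[X]} {s : Multiset F[X]}
    (hs : s ≤ normalizedFactors f) : normalizedFactors s.prod = s := by
  rw [normalizedFactors_prod_eq s fun p hp =>
    irreducible_of_normalized_factor p (Multiset.mem_of_le hs hp)]
  conv_rhs => rw [← Multiset.map_id s]
  exact Multiset.map_congr rfl fun p hp => normalize_normalized_factor p (Multiset.mem_of_le hs hp)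

theorem Monic.prod_normalizedFactors {f : F[X]} (hf : f.Monic) :
    (normalizedFactors f).prod = f := by
  rw [prod_normalizedFactors_eq hf.ne_zero, hf.normalize_eq_self]

theorem Monic.even_normalizedFactors_iff {f : F[X]} (hf : f.Monic) :
    Even (normalizedFactors f) ↔ ∃ h : F[X], h.Monic ∧ h * h = f := by
  refine ⟨fun ⟨r, hr⟩ => ⟨r.prod, ?_, ?_⟩, fun ⟨h, hh, hhf⟩ => ⟨normalizedFactors h, ?_⟩⟩
  · exact monic_prod_of_le_normalizedFactors (hr ▸ Multiset.le_add_right r r)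
  · rw [← Multiset.prod_add, ← hr, hf.prod_normalizedFactors]
  · rw [← hhf, normalizedFactors_mul hh.ne_zero hh.ne_zero]

theorem Monic.eq_of_mul_self_eq {g h : F[X]} (hg : g.Monic) (hh : h.Monic) (hgh : g * g = h * h) :
    g = h := by
  have hnf : normalizedFactors g = normalizedFactors h := by
    ext p
    have := congrArg (Multiset.count p ∘ normalizedFactors) hgh
    simp only [Function.comp_apply, normalizedFactors_mul hg.ne_zero hg.ne_zero,
      normalizedFactors_mul hh.ne_zero hh.ne_zero, Multiset.count_add] at this
    omega
  rw [← hg.prod_normalizedFactors, hnf, hh.prod_normalizedFactors]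

noncomputable def monicDivisors (f : F[X]) : Finset F[X] :=
  (Finset.Iic (normalizedFactors f)).image Multiset.prod

theorem mem_monicDivisors {f d : F[X]} (hf : f.Monic) :
    d ∈ monicDivisors f ↔ d.Monic ∧ d ∣ f := by
  simp only [monicDivisors, mem_image, mem_Iic]
  constructor
  · rintro ⟨s, hs, rfl⟩
    refine ⟨monic_prod_of_le_normalizedFactors hs, ?_⟩
    simpa [hf.prod_normalizedFactors] using Multiset.prod_dvd_prod_of_le hs
  · rintro ⟨hd, hdf⟩
    exact ⟨normalizedFactors d,
      (dvd_iff_normalizedFactors_le_normalizedFactors hd.ne_zero hf.ne_zero).mp hdf,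
      hd.prod_normalizedFactors⟩

theorem sum_monicDivisors_polyLiouville (f : F[X]) :
    ∑ d ∈ monicDivisors f, polyLiouville d = if Even (normalizedFactors f) then 1 else 0 := by
  rw [monicDivisors, sum_image fun s hs t ht hst => by
    rw [← normalizedFactors_prod_of_le (mem_Iic.mp hs), hst,
      normalizedFactors_prod_of_le (mem_Iic.mp ht)]]
  rw [← Multiset.sum_Iic_neg_one_pow_card]
  refine sum_congr rfl fun s hs => ?_
  rw [polyLiouville_eq_neg_one_pow, normalizedFactors_prod_of_le (mem_Iic.mp hs)]

end Factors

section Monics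

variable {F : Type*} [Field F] [Fintype F]

noncomputable instance (n : ℕ) : Fintype (degreeLT F n) :=
  Fintype.ofEquiv _ (degreeLTEquiv F n).toEquiv.symm

noncomputable instance (n : ℕ) : Fintype {f : F[X] | f.Monic ∧ f.natDegree = n} :=
  Fintype.ofEquiv _ (monicEquivDegreeLT n).symm

variable (F) in
noncomputable def monicsOfDegree (n : ℕ) : Finset F[X] :=
  {f : F[X] | f.Monic ∧ f.natDegree = n}.toFinset

theorem mem_monicsOfDegree {n : ℕ} {f : F[X]} :
    f ∈ monicsOfDegree F n ↔ f.Monic ∧ f.natDegree = n :=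
  Set.mem_toFinset

theorem sum_monicsOfDegree {M : Type*} [AddCommMonoid M] (n : ℕ) (w : F[X] → M) :
    ∑ f ∈ monicsOfDegree F n, w f = ∑ g : degreeLT F n, w (X ^ n + (g : F[X])) := by
  rw [monicsOfDegree, ← sum_set_coe]
  exact (Fintype.sum_equiv (κ := {f : F[X] | f.Monic ∧ f.natDegree = n})
    (monicEquivDegreeLT n).symm _ _ fun _ => rfl).symm

theorem finsum_monic_natDegree_eq_sum_monicsOfDegree {M : Type*} [AddCommMonoid M] (n : ℕ)
    (w : F[X] → M) :
    ∑ᶠ f ∈ {f : F[X] | f.Monic ∧ f.natDegree = n}, w f = ∑ f ∈ monicsOfDegree F n, w f :=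
  finsum_mem_eq_toFinset_sum w _

theorem card_degreeLT (n : ℕ) : Fintype.card (degreeLT F n) = Fintype.card F ^ n := by
  rw [Fintype.card_congr (degreeLTEquiv F n).toEquiv, Fintype.card_fun, Fintype.card_fin]

theorem sum_monicsOfDegree_eval {R : Type*} [CommRing R] [IsDomain R] [CharZero R] (a : F)
    {n : ℕ} (hn : 1 ≤ n) (w : F → R) :
    ∑ f ∈ monicsOfDegree F n, w (f.eval a) = (Fintype.card F : R) ^ (n - 1) * ∑ x, w x := by
  set S := ∑ f ∈ monicsOfDegree F n, w (f.eval a) with hS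
  have hC : ∀ c : F, C c ∈ degreeLT F n := fun c =>
    mem_degreeLT.mpr (degree_C_le.trans_lt (by exact_mod_cast hn))
  have hshift (c : F) : S = ∑ g : degreeLT F n, w ((X ^ n + (g : F[X])).eval a + c) := by
    rw [hS, sum_monicsOfDegree, ← Equiv.sum_comp (Equiv.addRight (⟨C c, hC c⟩ : degreeLT F n))]
    simp [add_assoc]
  have hq : (Fintype.card F : R) * S = (Fintype.card F : R) ^ n * ∑ x, w x :=
    calc (Fintype.card F : R) * S
        = ∑ c : F, ∑ g : degreeLT F n, w ((X ^ n + (g : F[X])).eval a + c) := by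
          rw [← sum_congr rfl fun c _ => hshift c]
          simp
      _ = ∑ g : degreeLT F n, ∑ x, w x :=
          sum_comm.trans (sum_congr rfl fun g _ => Equiv.sum_comp (Equiv.addLeft _) w)
      _ = (Fintype.card F : R) ^ n * ∑ x, w x := by simp [card_degreeLT]
  obtain ⟨k, rfl⟩ := Nat.exists_eq_add_of_le' hn
  rw [pow_succ', mul_assoc] at hq
  rw [Nat.add_sub_cancel]
  exact mul_left_cancel₀ (by simp [Fintype.card_ne_zero]) hq

theorem monicsOfDegree_zero : monicsOfDegree F 0 = {1} := by
  ext f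
  rw [mem_monicsOfDegree, mem_singleton]
  exact ⟨fun ⟨hf, hdeg⟩ => eq_one_of_monic_natDegree_zero hf hdeg, by rintro rfl; simp⟩

theorem sum_antidiagonal_mul_sum_monicsOfDegree {R : Type*} [CommSemiring R] (n : ℕ)
    (u v : F[X] → R) :
    ∑ p ∈ antidiagonal n, (∑ d ∈ monicsOfDegree F p.1, u d) * (∑ e ∈ monicsOfDegree F p.2, v e)
      = ∑ f ∈ monicsOfDegree F n, ∑ d ∈ monicDivisors f, u d * v (f / d) := by
  simp_rw [sum_mul_sum, ← sum_product']
  rw [sum_sigma', sum_sigma']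
  refine sum_nbij' (fun x => ⟨x.2.1 * x.2.2, x.2.1⟩)
    (fun y => ⟨(y.2.natDegree, (y.1 / y.2).natDegree), (y.2, y.1 / y.2)⟩) ?_ ?_ ?_ ?_ ?_
  · rintro ⟨⟨j, k⟩, d, e⟩ hx
    simp only [mem_sigma, mem_product, HasAntidiagonal.mem_antidiagonal,
      mem_monicsOfDegree] at hx ⊢
    obtain ⟨hjk, ⟨hd, rfl⟩, he, rfl⟩ := hx
    exact ⟨⟨hd.mul he, by rw [hd.natDegree_mul he, hjk]⟩,
      (mem_monicDivisors (hd.mul he)).mpr ⟨hd, dvd_mul_right d e⟩⟩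
  · rintro ⟨f, d⟩ hy
    simp only [mem_sigma, mem_monicsOfDegree] at hy
    obtain ⟨⟨hf, rfl⟩, hdf⟩ := hy
    obtain ⟨hd, e, rfl⟩ := (mem_monicDivisors hf).mp hdf
    have he := hd.of_mul_monic_left hf
    simp [mul_div_cancel_left₀ e hd.ne_zero, mem_monicsOfDegree, hd, he, hd.natDegree_mul he]
  · rintro ⟨⟨j, k⟩, d, e⟩ hx
    simp only [mem_sigma, mem_product, HasAntidiagonal.mem_antidiagonal,
      mem_monicsOfDegree] at hx
    obtain ⟨-, ⟨hd, rfl⟩, -, rfl⟩ := hx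
    simp [mul_div_cancel_left₀ e hd.ne_zero]
  · rintro ⟨f, d⟩ hy
    simp only [mem_sigma, mem_monicsOfDegree] at hy
    obtain ⟨⟨hf, -⟩, hdf⟩ := hy
    obtain ⟨hd, e, rfl⟩ := (mem_monicDivisors hf).mp hdf
    simp [mul_div_cancel_left₀ e hd.ne_zero]
  · rintro ⟨⟨j, k⟩, d, e⟩ hx
    simp only [mem_sigma, mem_product, mem_monicsOfDegree] at hx
    simp [mul_div_cancel_left₀ e hx.2.1.1.ne_zero]

theorem sum_monicsOfDegree_ite_even_normalizedFactors {M : Type*} [AddCommMonoid M] (n : ℕ)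
    (w : F[X] → M) :
    ∑ f ∈ monicsOfDegree F n, (if Even (normalizedFactors f) then w f else 0)
      = if Even n then ∑ h ∈ monicsOfDegree F (n / 2), w (h * h) else 0 := by
  rw [← sum_filter]
  split_ifs with hn
  · have hsq : (monicsOfDegree F n).filter (fun f => Even (normalizedFactors f))
        = (monicsOfDegree F (n / 2)).image fun h => h * h := by
      ext f
      simp only [mem_filter, mem_image, mem_monicsOfDegree]
      constructor
      · rintro ⟨⟨hf, hdeg⟩, hev⟩
        obtain ⟨h, hh, rfl⟩ := hf.even_normalizedFactors_iff.mp hev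
        exact ⟨h, ⟨hh, by rw [hh.natDegree_mul hh] at hdeg; omega⟩, rfl⟩
      · rintro ⟨h, ⟨hh, hdeg⟩, rfl⟩
        refine ⟨⟨hh.mul hh, ?_⟩, (hh.mul hh).even_normalizedFactors_iff.mpr ⟨h, hh, rfl⟩⟩
        rw [hh.natDegree_mul hh, hdeg, ← two_mul, Nat.two_mul_div_two_of_even hn]
    rw [hsq, sum_image fun g hg h hh hgh =>
      (mem_monicsOfDegree.mp hg).1.eq_of_mul_self_eq (mem_monicsOfDegree.mp hh).1 hgh]
  · refine sum_eq_zero fun f hf => absurd ?_ hn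
    simp only [mem_filter, mem_monicsOfDegree] at hf
    obtain ⟨⟨hf, rfl⟩, hev⟩ := hf
    obtain ⟨h, hh, rfl⟩ := hf.even_normalizedFactors_iff.mp hev
    exact ⟨h.natDegree, hh.natDegree_mul hh⟩

theorem sum_monicsOfDegree_polyLiouville_mul {R : Type*} [CommRing R] (χ : F[X] →* R)
    (hχ : ∀ k, 1 ≤ k → ∑ e ∈ monicsOfDegree F k, χ e = 0) (n : ℕ) :
    ∑ f ∈ monicsOfDegree F n, polyLiouville f * χ f
      = if Even n then ∑ h ∈ monicsOfDegree F (n / 2), χ (h * h) else 0 := by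
  have hconv := sum_antidiagonal_mul_sum_monicsOfDegree n (fun d => polyLiouville d * χ d) χ
  rw [sum_eq_single (n, 0) (fun p hp hpn => by
      rw [hχ p.2 (Nat.pos_of_ne_zero fun h0 =>
        hpn (Prod.ext (by have := mem_antidiagonal.mp hp; omega) h0)), mul_zero])
    (by simp), monicsOfDegree_zero, sum_singleton, map_one, mul_one] at hconv
  rw [hconv, ← sum_monicsOfDegree_ite_even_normalizedFactors]
  refine sum_congr rfl fun f hf => ?_
  have hdiv : ∀ d ∈ monicDivisors f, χ d * χ (f / d) = χ f := fun d hd => by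
    obtain ⟨hd, hdf⟩ := (mem_monicDivisors (mem_monicsOfDegree.mp hf).1).mp hd
    rw [← map_mul, EuclideanDomain.mul_div_cancel' hd.ne_zero hdf]
  calc ∑ d ∈ monicDivisors f, polyLiouville d * χ d * χ (f / d)
      = ((∑ d ∈ monicDivisors f, polyLiouville d : ℤ) : R) * χ f := by
        rw [Int.cast_sum, sum_mul]
        exact sum_congr rfl fun d hd => by rw [mul_assoc, hdiv d hd]
    _ = if Even (normalizedFactors f) then χ f else 0 := by
        rw [sum_monicDivisors_polyLiouville]
        split_ifs <;> simp

end Monics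

end Polynomial

theorem quadChar_eq_quadraticChar {F : Type*} [Field F] [Fintype F] (x : F) :
    quadChar F x = quadraticChar F x := by
  by_cases hx : x = 0 <;> by_cases hs : IsSquare x <;>
    simp [quadChar, quadraticChar_apply, quadraticCharFun, hx, hs]

theorem quadraticChar_mul_self {F : Type*} [Field F] [Fintype F] [DecidableEq F] (x : F) :
    quadraticChar F x * quadraticChar F x = if x = 0 then 0 else 1 := by
  split_ifs with hx
  · simp [hx]
  · rw [← sq, quadraticChar_sq_one hx]

/-- For `q` odd, `a ∈ F` and `n ≥ 1`, the λ-bias for the quadratic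
character modulo the linear polynomial `T − a` equals `(q − 1)·q^{n/2 − 1}` for even `n`
and `0` for odd `n`. -/
theorem lambdaBias_degree_one_modulus {F : Type*} [Field F] [Fintype F]
    (hq : Odd (Fintype.card F)) (a : F) (n : ℕ) (hn : 1 ≤ n) :
    ∑ᶠ f ∈ {f : Polynomial F | f.Monic ∧ f.natDegree = n},
      polyLiouville f * quadChar F (f.eval a) =
      if Even n then ((Fintype.card F : ℤ) - 1) * (Fintype.card F : ℤ) ^ (n / 2 - 1)
      else 0 := by
  have hF : ringChar F ≠ 2 := fun h => by
    have := FiniteField.even_card_of_char_two h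
    rw [Nat.odd_iff] at hq
    omega
  let χ : F[X] →* ℤ := (quadraticChar F).toMonoidHom.comp (evalRingHom a).toMonoidHom
  have hχ : ∀ k, 1 ≤ k → ∑ e ∈ monicsOfDegree F k, χ e = 0 := fun k hk =>
    (sum_monicsOfDegree_eval a hk (quadraticChar F ·)).trans <| by
      rw [quadraticChar_sum_zero hF, mul_zero]
  simp_rw [finsum_monic_natDegree_eq_sum_monicsOfDegree, quadChar_eq_quadraticChar]
  refine (sum_monicsOfDegree_polyLiouville_mul χ hχ n).trans ?_
  split_ifs with hn_even
  · have hm : 1 ≤ n / 2 := by obtain ⟨m, rfl⟩ := hn_even; omega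
    simp_rw [map_mul]
    refine (sum_monicsOfDegree_eval a hm fun x => quadraticChar F x * quadraticChar F x).trans ?_
    simp_rw [quadraticChar_mul_self, mul_comm _ (_ ^ _)]
    simp [sum_ite, filter_ne', Nat.cast_sub Fintype.card_pos]
  · rfl
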